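/- Let u be positively homogeneous of degree α ∈ (0,1), C² and positive on an open cone Ω ⊂ ℝⁿ \ {0}, and set v := u^{1/α}, which is 1-homogeneous. Then at each ω ∈ Ω ∩ S^{n-1}, σ_{n-1}(D²v) = f^{(n-1)/α − n} / (αⁿ(α−1)) · det D²u, where u = r^α f(ω). -/

import Mathlib

/-!
Since `u` is `α`-homogeneous, `v = u ^ (1 / α)` is `1`-homogeneous, and differentiating Euler's
identity `Dv(x) x = v(x)` gives `D²v(ω) ω = 0`. The chain rule writes
`D²v = a D²u + d ∇u ∇uᵀ` with `a = u^{1/α - 1} / α`, `d = (1 / α)(1 / α - 1) u^{1/α - 2}`, so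
`a D²u` is a rank-one perturbation of the singular symmetric matrix `D²v` whose kernel contains
the unit vector `ω`. For such `M`, the matrix determinant lemma
`det (M + x yᵀ) = det M + yᵀ adj(M) x` reduces to `det (M + x yᵀ) = (ω ⬝ x)(ω ⬝ y) tr adj M`.
With `ω ⬝ ∇u = α u` (Euler again), this gives `aⁿ det D²u = -d α² u² σ_{n-1}(D²v)`.
-/

open Filter Topology
open scoped Matrix

/-- The Hessian matrix of `v` at `x`. -/
noncomputable def hessianMatrix (n : ℕ) (v : EuclideanSpace ℝ (Fin n) → ℝ)
    (x : EuclideanSpace ℝ (Fin n)) : Matrix (Fin n) (Fin n) ℝ :=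
  Matrix.of fun i j =>
    iteratedFDeriv ℝ 2 v x ![EuclideanSpace.single i 1, EuclideanSpace.single j 1]

namespace Matrix

variable {ι : Type*} [Fintype ι] [DecidableEq ι]

theorem det_add_vecMulVec_of_isUnit_det {R : Type*} [CommRing R] {A : Matrix ι ι R}
    (hA : IsUnit A.det) (x y : ι → R) :
    (A + vecMulVec x y).det = A.det + y ⬝ᵥ (adjugate A *ᵥ x) := by
  rw [vecMulVec_eq Unit, det_add_replicateCol_mul_replicateRow hA, det_unique (n := Unit),
    ← cramer_eq_adjugate_mulVec, ← det_smul_inv_mulVec_eq_cramer _ _ hA, dotProduct_smul,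
    Matrix.mul_assoc, ← replicateCol_mulVec, add_apply, one_apply_eq,
    replicateRow_mul_replicateCol_apply, smul_eq_mul, mul_one_add]

theorem det_add_vecMulVec (A : Matrix ι ι ℝ) (x y : ι → ℝ) :
    (A + vecMulVec x y).det = A.det + y ⬝ᵥ (adjugate A *ᵥ x) := by
  -- `A + t • 1` is invertible for `t` off the finite spectrum of `-A`; conclude by continuity.
  let B : ℝ → Matrix ι ι ℝ := fun t => A + t • 1
  have hB : Continuous B := by fun_prop
  suffices h : (fun t => (B t + vecMulVec x y).det)
      = fun t => (B t).det + y ⬝ᵥ (adjugate (B t) *ᵥ x) by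
    simpa [B] using congrFun h 0
  refine Continuous.ext_on ((-A).finite_spectrum.countable.dense_compl ℝ) ?_ ?_ ?_
  · exact (hB.add continuous_const).matrix_det
  · exact hB.matrix_det.add
      (continuous_const.dotProduct (hB.matrix_adjugate.matrix_mulVec continuous_const))
  · intro t ht
    rw [Set.mem_compl_iff, spectrum.mem_iff, not_not, Algebra.algebraMap_eq_smul_one,
      sub_neg_eq_add, add_comm, isUnit_iff_isUnit_det] at ht
    exact det_add_vecMulVec_of_isUnit_det ht x y

theorem det_add_vecMulVec_of_mulVec_eq_zero {M : Matrix ι ι ℝ} (hM : Mᵀ = M) {w : ι → ℝ}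
    (hw : w ⬝ᵥ w = 1) (hMw : M *ᵥ w = 0) (x y : ι → ℝ) :
    (M + vecMulVec x y).det = (w ⬝ᵥ x) * (w ⬝ᵥ y) * M.adjugate.trace := by
  have hdet : ∀ A : Matrix ι ι ℝ, A *ᵥ w = 0 → A.det = 0 := fun A hA =>
    exists_mulVec_eq_zero_iff.mp ⟨w, by rintro rfl; simp at hw, hA⟩
  have hB : ∀ x y, (M + vecMulVec x y).det = y ⬝ᵥ (M.adjugate *ᵥ x) := fun x y => by
    rw [det_add_vecMulVec, hdet M hMw, zero_add]
  have hB_symm : ∀ x y, y ⬝ᵥ (M.adjugate *ᵥ x) = x ⬝ᵥ (M.adjugate *ᵥ y) := fun x y => by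
    rw [dotProduct_mulVec, dotProduct_comm, ← vecMul_transpose, adjugate_transpose, hM]
  have hB_proj : ∀ x y, y ⬝ᵥ (M.adjugate *ᵥ x) = (w ⬝ᵥ y) * (w ⬝ᵥ (M.adjugate *ᵥ x)) :=
    fun x y => by
    -- `M + x zᵀ` kills `w` whenever `z ⊥ w`, e.g. for `z = y - (w ⬝ y) w`
    have h : (y - (w ⬝ᵥ y) • w) ⬝ᵥ (M.adjugate *ᵥ x) = 0 := by
      rw [← hB]
      apply hdet
      rw [add_mulVec, hMw, vecMulVec_mulVec, dotProduct_comm, dotProduct_sub, dotProduct_smul, hw]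
      simp
    rwa [sub_dotProduct, smul_dotProduct, smul_eq_mul, sub_eq_zero] at h
  have hB_eq : ∀ x y,
      y ⬝ᵥ (M.adjugate *ᵥ x) = (w ⬝ᵥ x) * (w ⬝ᵥ y) * (w ⬝ᵥ (M.adjugate *ᵥ w)) := fun x y => by
    rw [hB_proj, hB_symm, hB_proj]; ring
  have htrace : M.adjugate.trace = w ⬝ᵥ (M.adjugate *ᵥ w) :=
    calc M.adjugate.trace = ∑ i, Pi.single i 1 ⬝ᵥ (M.adjugate *ᵥ Pi.single i 1) := by
          simp [trace]
      _ = ∑ i, w i * w i * (w ⬝ᵥ (M.adjugate *ᵥ w)) :=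
          Finset.sum_congr rfl fun i _ => by rw [hB_eq, dotProduct_single_one]
      _ = w ⬝ᵥ (M.adjugate *ᵥ w) := by rw [← Finset.sum_mul, ← dotProduct, hw, one_mul]
  rw [hB, hB_eq, htrace]

theorem trace_adjugate_eq_of_eq_smul_add_smul_vecMulVec {M H : Matrix ι ι ℝ} {w p : ι → ℝ}
    {α c : ℝ} (hα0 : α ≠ 0) (hα1 : α ≠ 1) (hc : 0 < c) (hM : Mᵀ = M) (hw : w ⬝ᵥ w = 1)
    (hMw : M *ᵥ w = 0) (hwp : w ⬝ᵥ p = α * c)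
    (hMH : M = (1 / α * c ^ (1 / α - 1)) • H
      + (1 / α * (1 / α - 1) * c ^ (1 / α - 2)) • vecMulVec p p) :
    M.adjugate.trace
      = c ^ (((Fintype.card ι : ℝ) - 1) / α - Fintype.card ι) / (α ^ Fintype.card ι * (α - 1))
        * H.det := by
  set n := Fintype.card ι
  have hdet := det_add_vecMulVec_of_mulVec_eq_zero hM hw hMw
    (-(1 / α * (1 / α - 1) * c ^ (1 / α - 2)) • p) p
  rw [hMH, smul_vecMulVec, add_assoc, ← add_smul, add_neg_cancel, zero_smul, add_zero, det_smul,
    dotProduct_smul, hwp, smul_eq_mul, ← hMH] at hdet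
  have hα1' : α - 1 ≠ 0 := sub_ne_zero.mpr hα1
  have hcoef : -(1 / α * (1 / α - 1) * c ^ (1 / α - 2)) * (α * c) * (α * c)
      = (α - 1) * c ^ (1 / α) := by
    rw [Real.rpow_sub hc, Real.rpow_two]
    field_simp
    ring
  have hpow : (1 / α * c ^ (1 / α - 1)) ^ n
      = (α - 1) * c ^ (1 / α) * (c ^ (((n : ℝ) - 1) / α - n) / (α ^ n * (α - 1))) := by
    rw [show ((n : ℝ) - 1) / α - n = (1 / α - 1) * n - 1 / α by ring,
      Real.rpow_sub hc ((1 / α - 1) * n), Real.rpow_mul hc.le, Real.rpow_natCast, mul_pow,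
      div_pow, one_pow]
    have : c ^ (1 / α) ≠ 0 := by positivity
    field_simp
  rw [hcoef, hpow] at hdet
  refine mul_left_cancel₀ (a := (α - 1) * c ^ (1 / α)) (mul_ne_zero hα1' (by positivity)) ?_
  linear_combination -hdet

end Matrix

section Homogeneous

variable {E F : Type*} [NormedAddCommGroup E] [NormedSpace ℝ E] [NormedAddCommGroup F]
  [NormedSpace ℝ F] {f : E → F} {x : E} {α : ℝ}

theorem HasFDerivAt.apply_self_of_homogeneous {f' : E →L[ℝ] F} (hf : HasFDerivAt f f' x)
    (hhom : ∀ t : ℝ, 0 < t → f (t • x) = t ^ α • f x) : f' x = α • f x := by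
  have hray : HasDerivAt (fun t : ℝ => f (t • x)) (f' x) 1 :=
    hf.comp_hasDerivAt_of_eq 1 (by simpa using (hasDerivAt_id (1 : ℝ)).smul_const x)
      (one_smul ℝ x).symm
  have hpow : HasDerivAt (fun t : ℝ => t ^ α • f x) (α • f x) 1 := by
    simpa using (Real.hasDerivAt_rpow_const (x := 1) (p := α) (Or.inl one_ne_zero)).smul_const (f x)
  refine hray.unique (hpow.congr_of_eventuallyEq ?_)
  filter_upwards [Ioi_mem_nhds one_pos] with t ht using hhom t ht

theorem fderiv_fderiv_apply_self_of_homogeneous {s : Set E} {H : E →L[ℝ] E →L[ℝ] F}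
    (hs : s ∈ 𝓝 x) (hdiff : ∀ y ∈ s, DifferentiableAt ℝ f y)
    (hhom : ∀ t : ℝ, 0 < t → ∀ y ∈ s, f (t • y) = t ^ α • f y)
    (hH : HasFDerivAt (fderiv ℝ f) H x) (ξ : E) : H ξ x = (α - 1) • fderiv ℝ f x ξ := by
  have hEuler : (fun y => fderiv ℝ f y y) =ᶠ[𝓝 x] fun y => α • f y := by
    filter_upwards [hs] with y hy using
      (hdiff y hy).hasFDerivAt.apply_self_of_homogeneous fun t ht => hhom t ht y hy
  have hrhs : HasFDerivAt (fun y => α • f y) (α • fderiv ℝ f x) x :=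
    (hdiff x (mem_of_mem_nhds hs)).hasFDerivAt.const_smul α
  have h := congrArg (· ξ)
    ((hH.clm_apply (hasFDerivAt_id x)).unique (hrhs.congr_of_eventuallyEq hEuler))
  simp only [add_apply, smul_apply, ContinuousLinearMap.comp_apply,
    ContinuousLinearMap.flip_apply, ContinuousLinearMap.id_apply, id_eq] at h
  rw [sub_smul, one_smul, ← h, add_sub_cancel_left]

end Homogeneous

theorem hasFDerivAt_fderiv_rpow_const {E : Type*} [NormedAddCommGroup E] [NormedSpace ℝ E]
    {u : E → ℝ} {x : E} {H : E →L[ℝ] E →L[ℝ] ℝ} (β : ℝ)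
    (hu : ∀ᶠ y in 𝓝 x, DifferentiableAt ℝ u y ∧ u y ≠ 0) (hH : HasFDerivAt (fderiv ℝ u) H x) :
    HasFDerivAt (fderiv ℝ fun y => u y ^ β)
      ((β * u x ^ (β - 1)) • H
        + ((β * (β - 1) * u x ^ (β - 2)) • fderiv ℝ u x).smulRight (fderiv ℝ u x)) x := by
  have hfderiv : (fderiv ℝ fun y => u y ^ β) =ᶠ[𝓝 x]
      fun y => (β * u y ^ (β - 1)) • fderiv ℝ u y := by
    filter_upwards [hu] with y hy using (hy.1.hasFDerivAt.rpow_const (Or.inl hy.2)).fderiv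
  have hcoeff : HasFDerivAt (fun y => β * u y ^ (β - 1))
      ((β * (β - 1) * u x ^ (β - 2)) • fderiv ℝ u x) x := by
    refine ((hu.self_of_nhds.1.hasFDerivAt.rpow_const (Or.inl hu.self_of_nhds.2)).const_mul
      β).congr_fderiv ?_
    rw [smul_smul]; ring_nf
  exact (hcoeff.smul hH).congr_of_eventuallyEq hfderiv

namespace EuclideanSpace

variable {n : ℕ}

theorem dual_apply_eq_dotProduct (T : EuclideanSpace ℝ (Fin n) →L[ℝ] ℝ)
    (ξ : EuclideanSpace ℝ (Fin n)) : T ξ = ξ.ofLp ⬝ᵥ fun j => T (single j 1) := by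
  conv_lhs => rw [← (basisFun (Fin n) ℝ).sum_repr ξ]
  simp [dotProduct]

theorem gradient_apply (f : EuclideanSpace ℝ (Fin n) → ℝ) (x : EuclideanSpace ℝ (Fin n))
    (i : Fin n) : gradient f x i = fderiv ℝ f x (single i 1) := by
  rw [← toDual_gradient, InnerProductSpace.toDual_apply_apply, inner_single_right]
  simp

theorem fderiv_apply_eq_dotProduct_gradient (f : EuclideanSpace ℝ (Fin n) → ℝ)
    (x ξ : EuclideanSpace ℝ (Fin n)) : fderiv ℝ f x ξ = ξ.ofLp ⬝ᵥ (gradient f x).ofLp := by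
  rw [dual_apply_eq_dotProduct]
  congr 1
  ext j
  exact (gradient_apply f x j).symm

theorem dotProduct_self_eq_one {ω : EuclideanSpace ℝ (Fin n)} (hω : ‖ω‖ = 1) :
    ω.ofLp ⬝ᵥ ω.ofLp = 1 := by
  have h := real_inner_self_eq_norm_sq ω
  rw [hω, one_pow, inner_eq_star_dotProduct] at h
  simpa using h

end EuclideanSpace

section Hessian

variable {n : ℕ}

theorem hessianMatrix_apply (f : EuclideanSpace ℝ (Fin n) → ℝ) (x : EuclideanSpace ℝ (Fin n))
    (i j : Fin n) :
    hessianMatrix n f x i j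
      = fderiv ℝ (fderiv ℝ f) x (EuclideanSpace.single i 1) (EuclideanSpace.single j 1) := by
  simp [hessianMatrix, iteratedFDeriv_two_apply]

theorem hessianMatrix_transpose {f : EuclideanSpace ℝ (Fin n) → ℝ} {x : EuclideanSpace ℝ (Fin n)}
    (hf : ContDiffAt ℝ 2 f x) : (hessianMatrix n f x)ᵀ = hessianMatrix n f x := by
  ext i j
  rw [Matrix.transpose_apply, hessianMatrix_apply, hessianMatrix_apply,
    hf.isSymmSndFDerivAt (by simp)]

theorem hessianMatrix_mulVec_self_of_homogeneous {f : EuclideanSpace ℝ (Fin n) → ℝ}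
    {s : Set (EuclideanSpace ℝ (Fin n))} {x : EuclideanSpace ℝ (Fin n)} {α : ℝ}
    (hs : s ∈ 𝓝 x) (hdiff : ∀ y ∈ s, DifferentiableAt ℝ f y)
    (hhom : ∀ t : ℝ, 0 < t → ∀ y ∈ s, f (t • y) = t ^ α * f y)
    (hf : DifferentiableAt ℝ (fderiv ℝ f) x) :
    hessianMatrix n f x *ᵥ x.ofLp = (α - 1) • (gradient f x).ofLp := by
  ext i
  rw [Matrix.mulVec, dotProduct_comm]
  simp only [hessianMatrix_apply]
  rw [← EuclideanSpace.dual_apply_eq_dotProduct,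
    fderiv_fderiv_apply_self_of_homogeneous hs hdiff hhom hf.hasFDerivAt, Pi.smul_apply,
    EuclideanSpace.gradient_apply]

theorem hessianMatrix_rpow {u : EuclideanSpace ℝ (Fin n) → ℝ} {x : EuclideanSpace ℝ (Fin n)}
    (β : ℝ) (hu : ∀ᶠ y in 𝓝 x, DifferentiableAt ℝ u y ∧ u y ≠ 0)
    (hH : DifferentiableAt ℝ (fderiv ℝ u) x) :
    hessianMatrix n (fun y => u y ^ β) x
      = (β * u x ^ (β - 1)) • hessianMatrix n u x
        + (β * (β - 1) * u x ^ (β - 2))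
          • Matrix.vecMulVec (gradient u x).ofLp (gradient u x).ofLp := by
  ext i j
  simp [hessianMatrix_apply, (hasFDerivAt_fderiv_rpow_const β hu hH.hasFDerivAt).fderiv,
    Matrix.vecMulVec_apply, EuclideanSpace.gradient_apply]
  ring

end Hessian

theorem sigma_of_one_homog_power_general (n : ℕ) (α : ℝ) (hα : α ∈ Set.Ioo (0 : ℝ) 1)
    (Ω : Set (EuclideanSpace ℝ (Fin n))) (hΩ : IsOpen Ω)
    (u : EuclideanSpace ℝ (Fin n) → ℝ)
    (hreg : ContDiffOn ℝ 2 u Ω) (hpos : ∀ x ∈ Ω, 0 < u x)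
    (hhom : ∀ t : ℝ, 0 < t → ∀ x ∈ Ω, u (t • x) = t ^ α * u x)
    (v : EuclideanSpace ℝ (Fin n) → ℝ) (hv : ∀ x, v x = u x ^ (1 / α))
    (ω : EuclideanSpace ℝ (Fin n)) (hωΩ : ω ∈ Ω) (hω : ‖ω‖ = 1) :
    (hessianMatrix n v ω).adjugate.trace
      = (u ω) ^ (((n : ℝ) - 1) / α - n) / (α ^ n * (α - 1)) * (hessianMatrix n u ω).det := by
  obtain ⟨hα0, hα1⟩ := hα
  obtain rfl : v = fun x => u x ^ (1 / α) := funext hv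
  have hΩω : Ω ∈ 𝓝 ω := hΩ.mem_nhds hωΩ
  have hu : ∀ x ∈ Ω, ContDiffAt ℝ 2 u x := fun x hx => hreg.contDiffAt (hΩ.mem_nhds hx)
  have hv : ∀ x ∈ Ω, ContDiffAt ℝ 2 (fun y => u y ^ (1 / α)) x := fun x hx =>
    (hu x hx).rpow_const_of_ne (hpos x hx).ne'
  have hd2 : ∀ {f : EuclideanSpace ℝ (Fin n) → ℝ}, ContDiffAt ℝ 2 f ω →
      DifferentiableAt ℝ (fderiv ℝ f) ω := fun hf =>
    (hf.fderiv_right (m := 1) (by norm_num)).differentiableAt one_ne_zero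
  have hvhom : ∀ t : ℝ, 0 < t → ∀ y ∈ Ω, u (t • y) ^ (1 / α) = t ^ (1 : ℝ) * u y ^ (1 / α) := by
    intro t ht y hy
    rw [hhom t ht y hy, Real.mul_rpow (by positivity) (hpos y hy).le, ← Real.rpow_mul ht.le,
      mul_one_div_cancel hα0.ne']
  have hker : hessianMatrix n (fun y => u y ^ (1 / α)) ω *ᵥ ω.ofLp = 0 := by
    simpa only [sub_self, zero_smul] using hessianMatrix_mulVec_self_of_homogeneous hΩω
      (fun y hy => (hv y hy).differentiableAt two_ne_zero) hvhom (hd2 (hv ω hωΩ))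
  have hEuler : ω.ofLp ⬝ᵥ (gradient u ω).ofLp = α * u ω := by
    rw [← EuclideanSpace.fderiv_apply_eq_dotProduct_gradient]
    exact ((hu ω hωΩ).differentiableAt two_ne_zero).hasFDerivAt.apply_self_of_homogeneous
      fun t ht => hhom t ht ω hωΩ
  have hchain := hessianMatrix_rpow (1 / α)
    (by filter_upwards [hΩω] with y hy using
      ⟨(hu y hy).differentiableAt two_ne_zero, (hpos y hy).ne'⟩) (hd2 (hu ω hωΩ))
  simpa only [Fintype.card_fin] using Matrix.trace_adjugate_eq_of_eq_smul_add_smul_vecMulVec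
    hα0.ne' hα1.ne (hpos ω hωΩ) (hessianMatrix_transpose (hv ω hωΩ))
    (EuclideanSpace.dotProduct_self_eq_one hω) hker hEuler hchain

theorem sigma_of_one_homog_power (n : ℕ) (α : ℝ) (hα : α ∈ Set.Ioo (0 : ℝ) 1)
    (Ω : Set (EuclideanSpace ℝ (Fin n))) (hΩ : IsOpen Ω)
    (hcone : ∀ x ∈ Ω, ∀ t : ℝ, 0 < t → t • x ∈ Ω) (h0 : (0 : EuclideanSpace ℝ (Fin n)) ∉ Ω)
    (u : EuclideanSpace ℝ (Fin n) → ℝ)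
    (hreg : ContDiffOn ℝ 2 u Ω) (hpos : ∀ x ∈ Ω, 0 < u x)
    (hhom : ∀ t : ℝ, 0 < t → ∀ x ∈ Ω, u (t • x) = t ^ α * u x)
    (v : EuclideanSpace ℝ (Fin n) → ℝ) (hv : ∀ x, v x = u x ^ (1 / α))
    (ω : EuclideanSpace ℝ (Fin n)) (hωΩ : ω ∈ Ω) (hω : ‖ω‖ = 1) :
    (hessianMatrix n v ω).adjugate.trace
      = (u ω) ^ (((n : ℝ) - 1) / α - n) / (α ^ n * (α - 1)) * (hessianMatrix n u ω).det :=
  sigma_of_one_homog_power_general n α hα Ω hΩ u hreg hpos hhom v hv ω hωΩ hω
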